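/- Let 𝒳 be a finite nonempty set and Q a probability measure on 𝒳 × {0,1} × {0,1} with coordinates (X, A, Y) such that Q(X=x, A=a, Y=y) > 0 for all x, a, y; let ρ ∈ (0,1). Define μ_a(x) = Q(Y=1|X=x,A=a), π_a(x) = Q(A=a|X=x), η(x) = Q(Y=1|X=x), ω = Q(Y=1), ω_y = Q(Y=y), η_y(x) = Q(Y=y|X=x), logit(t) = log(t/(1−t)), ψ_{a,y} = E_Q[logit(μ_a(X)) | Y=y], and for a, y ∈ {0,1} the influence function φ_{a,y}(x,a',y') = logit(μ_a(x))·1{y'=y}/ω_y + (η_y(x)/ω_y)·1{a'=a}·(y' − μ_a(x))/(π_a(x)·μ_a(x)·(1−μ_a(x))) − ψ_{a,y}·1{y'=y}/ω_y believed evaluated at observation (x,a',y'). Define φ = ρ·(φ_{1,1} − φ_{0,1}) + (1−ρ)·(φ_{1,0} − φ_{0,0}), the distribution-corrected log conditional odds ratio Ψ(x,y) = (y·ρ/ω + (1−y)·(1−ρ)/(1−ω))·(logit(μ₁(x)) − logit(μ₀(x))), and the distribution-corrected aggregate log odds ratio Ψ*(y) = y·(ρ/ω)·(ψ_{1,1}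 − ψ_{0,1}) + (1−y)·((1−ρ)/(1−ω))·(ψ_{1,0} − ψ_{0,0}). Then the nonparametric efficiency bound decomposition holds: Var_Q(φ(X,A,Y)) = Var_Q(Ψ(X,Y)) + Var_Q(Ψ*(Y)) − 2·Cov_Q(Ψ(X,Y), Ψ*(Y)) + E_Q[ (1/(π₁(X)·μ₁(X)·(1−μ₁(X))) + 1/(π₀(X)·μ₀(X)·(1−μ₀(X)))) · ( ((ρ−ω)/(ω(1−ω)))·η(X) + (1−ρ)/(1−ω) )² ]. -/

import Mathlib

open Finset

/-- `logit t = log (t / (1 - t))`. -/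
noncomputable def logit (t : ℝ) : ℝ := Real.log (t / (1 - t))

/-- Numeric value of a binary variable: `true ↦ 1`, `false ↦ 0`. -/
noncomputable def b2r (b : Bool) : ℝ := if b then 1 else 0

/-- `μ_a(x) = Q(Y=1 | X=x, A=a)` for a data distribution `Q` on `𝒳 × {0,1} × {0,1}`
(coordinates `(X, A, Y)`, `true = 1`, `false = 0`). -/
noncomputable def mu {𝒳 : Type*} (Q : 𝒳 × Bool × Bool → ℝ) (a : Bool) (x : 𝒳) : ℝ :=
  Q (x, a, true) / (Q (x, a, true) + Q (x, a, false))

/-- `π_a(x) = Q(A=a | X=x)`. -/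
noncomputable def piA {𝒳 : Type*} (Q : 𝒳 × Bool × Bool → ℝ) (a : Bool) (x : 𝒳) : ℝ :=
  (Q (x, a, true) + Q (x, a, false)) / ∑ a' : Bool, ∑ y' : Bool, Q (x, a', y')

/-- `η_y(x) = Q(Y=y | X=x)`. -/
noncomputable def etaY {𝒳 : Type*} (Q : 𝒳 × Bool × Bool → ℝ) (y : Bool) (x : 𝒳) : ℝ :=
  (∑ a' : Bool, Q (x, a', y)) / ∑ a' : Bool, ∑ y' : Bool, Q (x, a', y')

/-- `ω_y = Q(Y=y)`. -/
noncomputable def omegaY {𝒳 : Type*} [Fintype 𝒳] (Q : 𝒳 × Bool × Bool → ℝ) (y : Bool) : ℝ :=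
  ∑ x, ∑ a' : Bool, Q (x, a', y)

/-- `ψ_{a,y} = E_Q[logit(μ_a(X)) | Y=y]`. -/
noncomputable def psi {𝒳 : Type*} [Fintype 𝒳] (Q : 𝒳 × Bool × Bool → ℝ) (a y : Bool) : ℝ :=
  (∑ x, (∑ a' : Bool, Q (x, a', y)) * logit (mu Q a x)) / omegaY Q y

/-- The influence function `φ_{a,y}` of `ψ_{a,y}`, evaluated at an observation `z = (x, a', y')`:
`φ_{a,y}(x,a',y') = logit(μ_a(x))·1{y'=y}/ω_y
  + (η_y(x)/ω_y)·1{a'=a}·(y' − μ_a(x))/(π_a(x)·μ_a(x)·(1−μ_a(x))) − ψ_{a,y}·1{y'=y}/ω_y`. -/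
noncomputable def phiAY {𝒳 : Type*} [Fintype 𝒳] (Q : 𝒳 × Bool × Bool → ℝ) (a y : Bool)
    (z : 𝒳 × Bool × Bool) : ℝ :=
  logit (mu Q a z.1) * (if z.2.2 = y then (1 : ℝ) else 0) / omegaY Q y +
    etaY Q y z.1 / omegaY Q y *
      ((if z.2.1 = a then (1 : ℝ) else 0) * (b2r z.2.2 - mu Q a z.1) /
        (piA Q a z.1 * mu Q a z.1 * (1 - mu Q a z.1))) -
    psi Q a y * (if z.2.2 = y then (1 : ℝ) else 0) / omegaY Q y

/-- Expectation under `Q`. -/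
noncomputable def EQ {𝒳 : Type*} [Fintype 𝒳] (Q : 𝒳 × Bool × Bool → ℝ)
    (f : 𝒳 × Bool × Bool → ℝ) : ℝ :=
  ∑ z : 𝒳 × Bool × Bool, Q z * f z

/-- Variance under `Q`. -/
noncomputable def varQ {𝒳 : Type*} [Fintype 𝒳] (Q : 𝒳 × Bool × Bool → ℝ)
    (f : 𝒳 × Bool × Bool → ℝ) : ℝ :=
  EQ Q (fun z => f z ^ 2) - (EQ Q f) ^ 2

/-- Covariance under `Q`. -/
noncomputable def covQ {𝒳 : Type*} [Fintype 𝒳] (Q : 𝒳 × Bool × Bool → ℝ)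
    (f g : 𝒳 × Bool × Bool → ℝ) : ℝ :=
  EQ Q (fun z => f z * g z) - EQ Q f * EQ Q g

/-!
The influence function splits as `φ = Ψ − Ψ* + R`, where
`R(x,a,y) = c(x)·(±1)_a·(y − μ_a(x))/(π_a(x)μ_a(x)(1 − μ_a(x)))` with
`c = ρ·η₁/ω₁ + (1 − ρ)·η₀/ω₀`. The inverse-weighted residual equals `±Q(X=x)/Q(x,a,y)`, so
`Q(x,a,y)·R(x,a,y) = ±c(x)Q(X=x)` with opposite signs for `a = 1` and `a = 0`: `R` has zero mean
given `(X, Y)` and is therefore uncorrelated with `Ψ − Ψ*`. Its second moment is the last term,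
with `c` rewritten through `ω₀ = 1 − ω` and `η₀ = 1 − η`.
-/

section VarianceAlgebra

variable {𝒳 : Type*} [Fintype 𝒳] {Q : 𝒳 × Bool × Bool → ℝ}

lemma varQ_sub (f g : 𝒳 × Bool × Bool → ℝ) :
    varQ Q (fun z => f z - g z) = varQ Q f + varQ Q g - 2 * covQ Q f g := by
  have hsq : EQ Q (fun z => (f z - g z) ^ 2) =
      EQ Q (fun z => f z ^ 2) + EQ Q (fun z => g z ^ 2) - 2 * EQ Q (fun z => f z * g z) := by
    simp only [EQ, mul_sum, ← sum_add_distrib, ← sum_sub_distrib]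
    exact sum_congr rfl fun z _ => by ring
  have hmean : EQ Q (fun z => f z - g z) = EQ Q f - EQ Q g := by
    simp only [EQ, mul_sub, sum_sub_distrib]
  rw [varQ, varQ, varQ, covQ, hsq, hmean]
  ring

lemma varQ_add_of_orthogonal {f h : 𝒳 × Bool × Bool → ℝ} (hh : EQ Q h = 0)
    (hfh : EQ Q (fun z => f z * h z) = 0) :
    varQ Q (fun z => f z + h z) = varQ Q f + EQ Q (fun z => h z ^ 2) := by
  have hsq : EQ Q (fun z => (f z + h z) ^ 2) =
      EQ Q (fun z => f z ^ 2) + 2 * EQ Q (fun z => f z * h z) + EQ Q (fun z => h z ^ 2) := by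
    simp only [EQ, mul_sum, ← sum_add_distrib]
    exact sum_congr rfl fun z _ => by ring
  have hmean : EQ Q (fun z => f z + h z) = EQ Q f + EQ Q h := by
    simp only [EQ, mul_add, sum_add_distrib]
  rw [varQ, varQ, hsq, hmean, hh, hfh]
  ring

end VarianceAlgebra

section Nuisance

variable {𝒳 : Type*} {Q : 𝒳 × Bool × Bool → ℝ}

/-- `Q(X = x)`. -/
noncomputable def marginalX (Q : 𝒳 × Bool × Bool → ℝ) (x : 𝒳) : ℝ :=
  ∑ a' : Bool, ∑ y' : Bool, Q (x, a', y')

lemma marginalX_pos (hQ : ∀ z, 0 < Q z) (x : 𝒳) : 0 < marginalX Q x :=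
  sum_pos (fun _ _ => sum_pos (fun _ _ => hQ _) univ_nonempty) univ_nonempty

lemma marginalX_eq (x : 𝒳) :
    marginalX Q x =
      Q (x, true, true) + Q (x, true, false) + (Q (x, false, true) + Q (x, false, false)) := by
  simp only [marginalX, Fintype.sum_bool]

lemma piA_mul_mu_mul_one_sub_mu (hQ : ∀ z, 0 < Q z) (a : Bool) (x : 𝒳) :
    piA Q a x * mu Q a x * (1 - mu Q a x) =
      Q (x, a, true) * Q (x, a, false) /
        ((Q (x, a, true) + Q (x, a, false)) * marginalX Q x) := by
  have hs : Q (x, a, true) + Q (x, a, false) ≠ 0 := (add_pos (hQ _) (hQ _)).ne'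
  have hq := (marginalX_pos hQ x).ne'
  rw [piA, mu, ← marginalX]
  field_simp
  ring

lemma one_div_piA_mul_mu_mul_one_sub_mu (hQ : ∀ z, 0 < Q z) (a : Bool) (x : 𝒳) :
    1 / (piA Q a x * mu Q a x * (1 - mu Q a x)) =
      marginalX Q x / Q (x, a, true) + marginalX Q x / Q (x, a, false) := by
  have ht := (hQ (x, a, true)).ne'
  have hf := (hQ (x, a, false)).ne'
  rw [piA_mul_mu_mul_one_sub_mu hQ]
  field_simp
  ring

noncomputable def weightedResidual (Q : 𝒳 × Bool × Bool → ℝ) (z : 𝒳 × Bool × Bool) : ℝ :=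
  (b2r z.2.2 - mu Q z.2.1 z.1) / (piA Q z.2.1 z.1 * mu Q z.2.1 z.1 * (1 - mu Q z.2.1 z.1))

def boolSign (b : Bool) : ℝ := if b then 1 else -1

lemma weightedResidual_eq (hQ : ∀ z, 0 < Q z) (z : 𝒳 × Bool × Bool) :
    weightedResidual Q z = boolSign z.2.2 * marginalX Q z.1 / Q z := by
  obtain ⟨x, a, y⟩ := z
  have ht := (hQ (x, a, true)).ne'
  have hf := (hQ (x, a, false)).ne'
  have hs : Q (x, a, true) + Q (x, a, false) ≠ 0 := (add_pos (hQ _) (hQ _)).ne'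
  rw [weightedResidual, piA_mul_mu_mul_one_sub_mu hQ, mu]
  cases y <;> simp only [b2r, boolSign, Bool.false_eq_true, if_true, if_false] <;>
    field_simp <;> ring

lemma etaY_false (hQ : ∀ z, 0 < Q z) (x : 𝒳) : etaY Q false x = 1 - etaY Q true x := by
  have hq := (marginalX_pos hQ x).ne'
  rw [etaY, etaY, ← marginalX, eq_sub_iff_add_eq, ← add_div, div_eq_one_iff_eq hq, marginalX_eq]
  simp only [Fintype.sum_bool]
  ring

end Nuisance

section Outcome

variable {𝒳 : Type*} [Fintype 𝒳] {Q : 𝒳 × Bool × Bool → ℝ}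

lemma omegaY_false (hQsum : ∑ z : 𝒳 × Bool × Bool, Q z = 1) :
    omegaY Q false = 1 - omegaY Q true := by
  have h : omegaY Q true + omegaY Q false = 1 := by
    rw [← hQsum]
    simp only [omegaY, Fintype.sum_prod_type, Fintype.sum_bool, ← sum_add_distrib]
    exact sum_congr rfl fun x _ => by ring
  linarith

lemma omegaY_pos (hQ : ∀ z, 0 < Q z) (x : 𝒳) (y : Bool) : 0 < omegaY Q y :=
  lt_of_lt_of_le (sum_pos (fun _ _ => hQ _) univ_nonempty)
    (single_le_sum (f := fun x => ∑ a' : Bool, Q (x, a', y))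
      (fun _ _ => sum_nonneg fun _ _ => (hQ _).le) (mem_univ x))

noncomputable def residualCoef (Q : 𝒳 × Bool × Bool → ℝ) (ρ : ℝ) (x : 𝒳) : ℝ :=
  ρ * etaY Q true x / omegaY Q true + (1 - ρ) * etaY Q false x / omegaY Q false

lemma residualCoef_eq (hQsum : ∑ z : 𝒳 × Bool × Bool, Q z = 1) (hQ : ∀ z, 0 < Q z)
    (ρ : ℝ) (x : 𝒳) :
    residualCoef Q ρ x =
      (ρ - omegaY Q true) / (omegaY Q true * (1 - omegaY Q true)) * etaY Q true x +
        (1 - ρ) / (1 - omegaY Q true) := by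
  have h1 := (omegaY_pos hQ x true).ne'
  have h0 : 1 - omegaY Q true ≠ 0 := omegaY_false hQsum ▸ (omegaY_pos hQ x false).ne'
  rw [residualCoef, omegaY_false hQsum, etaY_false hQ]
  field_simp
  ring

end Outcome

section Augmentation

variable {𝒳 : Type*} [Fintype 𝒳] {Q : 𝒳 × Bool × Bool → ℝ}

noncomputable def augmentation (Q : 𝒳 × Bool × Bool → ℝ) (ρ : ℝ) (z : 𝒳 × Bool × Bool) : ℝ :=
  residualCoef Q ρ z.1 * (boolSign z.2.1 * weightedResidual Q z)

lemma phi_eq_sub_add_augmentation (hQsum : ∑ z : 𝒳 × Bool × Bool, Q z = 1) (ρ : ℝ)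
    (z : 𝒳 × Bool × Bool) :
    ρ * (phiAY Q true true z - phiAY Q false true z) +
        (1 - ρ) * (phiAY Q true false z - phiAY Q false false z) =
      (b2r z.2.2 * (ρ / omegaY Q true) + (1 - b2r z.2.2) * ((1 - ρ) / (1 - omegaY Q true))) *
          (logit (mu Q true z.1) - logit (mu Q false z.1)) -
        (b2r z.2.2 * (ρ / omegaY Q true) * (psi Q true true - psi Q false true) +
          (1 - b2r z.2.2) * ((1 - ρ) / (1 - omegaY Q true)) *
            (psi Q true false - psi Q false false)) +
        augmentation Q ρ z := by
  obtain ⟨x, a, y⟩ := z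
  rw [← omegaY_false hQsum]
  cases a <;> cases y <;>
    simp only [phiAY, augmentation, residualCoef, weightedResidual, boolSign, b2r,
      Bool.false_eq_true, Bool.true_eq_false, if_false, if_true] <;> ring

lemma Q_mul_augmentation (hQ : ∀ z, 0 < Q z) (ρ : ℝ) (z : 𝒳 × Bool × Bool) :
    Q z * augmentation Q ρ z =
      residualCoef Q ρ z.1 * boolSign z.2.1 * boolSign z.2.2 * marginalX Q z.1 := by
  rw [augmentation, weightedResidual_eq hQ]
  field_simp [(hQ z).ne']

lemma EQ_mul_augmentation (hQ : ∀ z, 0 < Q z) (ρ : ℝ) (g : 𝒳 → Bool → ℝ) :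
    EQ Q (fun z => g z.1 z.2.2 * augmentation Q ρ z) = 0 := by
  have hcomm : ∀ z, Q z * (g z.1 z.2.2 * augmentation Q ρ z) =
      g z.1 z.2.2 * (Q z * augmentation Q ρ z) := fun z => mul_left_comm _ _ _
  simp only [EQ, hcomm, Q_mul_augmentation hQ, Fintype.sum_prod_type, Fintype.sum_bool, boolSign,
    if_true, if_false, Bool.false_eq_true]
  exact sum_eq_zero fun x _ => by ring

lemma EQ_augmentation (hQ : ∀ z, 0 < Q z) (ρ : ℝ) : EQ Q (augmentation Q ρ) = 0 := by
  simpa using EQ_mul_augmentation hQ ρ (fun _ _ => 1)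

lemma EQ_augmentation_sq (hQ : ∀ z, 0 < Q z) (ρ : ℝ) :
    EQ Q (fun z => augmentation Q ρ z ^ 2) =
      EQ Q (fun z =>
        (1 / (piA Q true z.1 * mu Q true z.1 * (1 - mu Q true z.1)) +
            1 / (piA Q false z.1 * mu Q false z.1 * (1 - mu Q false z.1))) *
          residualCoef Q ρ z.1 ^ 2) := by
  simp only [EQ, Fintype.sum_prod_type, Fintype.sum_bool, augmentation, weightedResidual_eq hQ,
    one_div_piA_mul_mu_mul_one_sub_mu hQ, boolSign, if_true, if_false, Bool.false_eq_true]
  refine sum_congr rfl fun x _ => ?_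
  have htt := (hQ (x, true, true)).ne'
  have htf := (hQ (x, true, false)).ne'
  have hft := (hQ (x, false, true)).ne'
  have hff := (hQ (x, false, false)).ne'
  field_simp
  rw [marginalX_eq]
  ring

end Augmentation

theorem efficiency_bound_decomposition_general
    {𝒳 : Type*} [Fintype 𝒳]
    (Q : 𝒳 × Bool × Bool → ℝ) (ρ : ℝ)
    (hQsum : ∑ z : 𝒳 × Bool × Bool, Q z = 1)
    (hQpos : ∀ z, 0 < Q z) :
    let ω : ℝ := omegaY Q true
    let φ : 𝒳 × Bool × Bool → ℝ := fun z =>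
      ρ * (phiAY Q true true z - phiAY Q false true z) +
        (1 - ρ) * (phiAY Q true false z - phiAY Q false false z)
    let Ψ : 𝒳 × Bool × Bool → ℝ := fun z =>
      (b2r z.2.2 * (ρ / ω) + (1 - b2r z.2.2) * ((1 - ρ) / (1 - ω))) *
        (logit (mu Q true z.1) - logit (mu Q false z.1))
    let Ψs : 𝒳 × Bool × Bool → ℝ := fun z =>
      b2r z.2.2 * (ρ / ω) * (psi Q true true - psi Q false true) +
        (1 - b2r z.2.2) * ((1 - ρ) / (1 - ω)) * (psi Q true false - psi Q false false)
    varQ Q φ = varQ Q Ψ + varQ Q Ψs - 2 * covQ Q Ψ Ψs +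
      EQ Q (fun z =>
        (1 / (piA Q true z.1 * mu Q true z.1 * (1 - mu Q true z.1)) +
            1 / (piA Q false z.1 * mu Q false z.1 * (1 - mu Q false z.1))) *
          ((ρ - ω) / (ω * (1 - ω)) * etaY Q true z.1 + (1 - ρ) / (1 - ω)) ^ 2) := by
  intro ω φ Ψ Ψs
  have hφ : φ = fun z => (Ψ z - Ψs z) + augmentation Q ρ z :=
    funext (phi_eq_sub_add_augmentation hQsum ρ)
  have horth : EQ Q (fun z => (Ψ z - Ψs z) * augmentation Q ρ z) = 0 :=
    EQ_mul_augmentation hQpos ρ (fun x y => Ψ (x, true, y) - Ψs (x, true, y))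
  rw [hφ, varQ_add_of_orthogonal (EQ_augmentation hQpos ρ) horth, varQ_sub,
    EQ_augmentation_sq hQpos, funext (residualCoef_eq hQsum hQpos ρ)]

/-- nonparametric efficiency bound decomposition for the (log) geometric odds
ratio under outcome-dependent sampling.  With `φ = ρ·(φ_{1,1} − φ_{0,1}) + (1−ρ)·(φ_{1,0} −
φ_{0,0})`, the distribution-corrected log conditional odds ratio `Ψ(x,y)` and the
distribution-corrected aggregate log odds ratio `Ψ*(y)`,
`Var_Q(φ) = Var_Q(Ψ) + Var_Q(Ψ*) − 2·Cov_Q(Ψ, Ψ*) + E_Q[(1/(π₁μ₁(1−μ₁)) + 1/(π₀μ₀(1−μ₀)))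
  ·(((ρ−ω)/(ω(1−ω)))·η(X) + (1−ρ)/(1−ω))²]`. -/
theorem efficiency_bound_decomposition
    {𝒳 : Type*} [Fintype 𝒳] [Nonempty 𝒳]
    (Q : 𝒳 × Bool × Bool → ℝ) (ρ : ℝ)
    (hQsum : ∑ z : 𝒳 × Bool × Bool, Q z = 1)
    (hQpos : ∀ z, 0 < Q z)
    (hρ : ρ ∈ Set.Ioo (0 : ℝ) 1) :
    let ω : ℝ := omegaY Q true
    let φ : 𝒳 × Bool × Bool → ℝ := fun z =>
      ρ * (phiAY Q true true z - phiAY Q false true z) +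
        (1 - ρ) * (phiAY Q true false z - phiAY Q false false z)
    let Ψ : 𝒳 × Bool × Bool → ℝ := fun z =>
      (b2r z.2.2 * (ρ / ω) + (1 - b2r z.2.2) * ((1 - ρ) / (1 - ω))) *
        (logit (mu Q true z.1) - logit (mu Q false z.1))
    let Ψs : 𝒳 × Bool × Bool → ℝ := fun z =>
      b2r z.2.2 * (ρ / ω) * (psi Q true true - psi Q false true) +
        (1 - b2r z.2.2) * ((1 - ρ) / (1 - ω)) * (psi Q true false - psi Q false false)
    varQ Q φ = varQ Q Ψ + varQ Q Ψs - 2 * covQ Q Ψ Ψs +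
      EQ Q (fun z =>
        (1 / (piA Q true z.1 * mu Q true z.1 * (1 - mu Q true z.1)) +
            1 / (piA Q false z.1 * mu Q false z.1 * (1 - mu Q false z.1))) *
          ((ρ - ω) / (ω * (1 - ω)) * etaY Q true z.1 + (1 - ρ) / (1 - ω)) ^ 2) :=
  efficiency_bound_decomposition_general Q ρ hQsum hQpos
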